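/- arXiv:2006.02066 — 2 statements merged into one kernel-verified Lean document; each statement's English description precedes it below -/
import Mathlib

section
/- Let r0 > 0 and let f : [r0,∞) → ℝ be measurable with ∫_{r0}^∞ |f(t)| dt < ∞. Then for every ψ ∈ D(r0,∞), the function (ψ(r)/ψ'(r))·f(r) tends to 0 in ψ-density as r → ∞; that is, for every ε > 0, the set S_ε = {r > r0 : (ψ(r)/ψ'(r))·|f(r)| > ε} has zero upper ψ-density. -/
open MeasureTheory Filter Set

/-- The filter of real numbers tending to `R` from below (equals `atTop` when `R = ⊤`). -/
noncomputable def densFilter (R : EReal) : Filter ℝ :=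
  Filter.comap (fun x : ℝ => (x : EReal)) (nhdsWithin R (Set.Iio R))

/-- The interval `(r0, R)` as a set of reals. -/
def psiDomain (r0 : ℝ) (R : EReal) : Set ℝ := {r : ℝ | r0 < r ∧ (r : EReal) < R}

/-- Barry's class `𝒟(r0,R)`: positive, unbounded, differentiable, strictly increasing
functions on `(r0, R)`. -/
structure PsiClass (r0 : ℝ) (R : EReal) (ψ : ℝ → ℝ) : Prop where
  pos : ∀ r ∈ psiDomain r0 R, 0 < ψ r
  unbounded : Filter.Tendsto ψ (densFilter R) Filter.atTop
  differentiable : ∀ r ∈ psiDomain r0 R, DifferentiableAt ℝ ψ r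
  strictMono : StrictMonoOn ψ (psiDomain r0 R)

/-- The upper `ψ`-density of a set `E ⊆ (r0, R)`:
`limsup_{r→R⁻} (1/ψ(r)) ∫_{E∩[r0,r)} ψ'(t) dt`. -/
noncomputable def upperPsiDens (r0 : ℝ) (R : EReal) (ψ : ℝ → ℝ) (E : Set ℝ) : ℝ :=
  Filter.limsup (fun r => (∫ t in E ∩ Set.Ico r0 r, deriv ψ t) / ψ r) (densFilter R)

/-- The lower `ψ`-density of a set `E ⊆ (r0, R)`. -/
noncomputable def lowerPsiDens (r0 : ℝ) (R : EReal) (ψ : ℝ → ℝ) (E : Set ℝ) : ℝ :=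
  Filter.liminf (fun r => (∫ t in E ∩ Set.Ico r0 r, deriv ψ t) / ψ r) (densFilter R)

lemma densFilter_top : densFilter ⊤ = atTop := by
  have h1 : Set.Iio (⊤ : EReal) = {(⊤ : EReal)}ᶜ := by
    ext x; simp [lt_top_iff_ne_top]
  rw [densFilter, h1, EReal.nhdsWithin_top, Filter.comap_map]
  intro a b h
  simpa using h

theorem statement18 (r0 : ℝ) (hr0 : 0 < r0) (f : ℝ → ℝ) (hmeas : Measurable f)
    (hint : IntegrableOn f (Set.Ici r0))
    (ψ : ℝ → ℝ) (hψ : PsiClass r0 ⊤ ψ)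
    (ε : ℝ) (hε : 0 < ε) :
    upperPsiDens r0 ⊤ ψ {r | r0 < r ∧ ε < ψ r / deriv ψ r * |f r|} = 0 := by
  set S : Set ℝ := {r | r0 < r ∧ ε < ψ r / deriv ψ r * |f r|} with hSdef
  have hdom : ∀ {x : ℝ}, r0 < x → x ∈ psiDomain r0 ⊤ := fun hx => ⟨hx, EReal.coe_lt_top _⟩
  -- derivative is nonnegative on the domain
  have hd0 : ∀ t, r0 < t → 0 ≤ deriv ψ t := by
    intro t ht
    have hder : HasDerivAt ψ (deriv ψ t) t := (hψ.differentiable t (hdom ht)).hasDerivAt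
    have hslope : Tendsto (slope ψ t) (nhdsWithin t (Set.Ioi t)) (nhds (deriv ψ t)) :=
      (hasDerivAt_iff_tendsto_slope.1 hder).mono_left
        (nhdsWithin_mono t (fun x hx => (hx : t < x).ne'))
    refine ge_of_tendsto hslope ?_
    filter_upwards [self_mem_nhdsWithin] with x hx
    simp only [Set.mem_Ioi] at hx
    have hlt : ψ t < ψ x := hψ.strictMono (hdom ht) (hdom (ht.trans hx)) hx
    rw [slope_def_field]
    apply div_nonneg (by linarith) (by linarith)
  -- pointwise bound on S
  have hkey : ∀ t ∈ S, deriv ψ t ≤ ψ t * |f t| / ε := by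
    rintro t ⟨ht, hts⟩
    rcases eq_or_lt_of_le (hd0 t ht) with h0 | hpos
    · rw [← h0, div_zero, zero_mul] at hts
      linarith
    · rw [div_mul_eq_mul_div, lt_div_iff₀ hpos] at hts
      rw [le_div_iff₀ hε]
      linarith
  -- S is measurable
  have hSmeas : MeasurableSet S := by
    have hcont : ContinuousOn ψ (Set.Ioi r0) := fun x hx =>
      (hψ.differentiable x (hdom hx)).continuousAt.continuousWithinAt
    have hrest : Continuous ((Set.Ioi r0).restrict ψ) :=
      continuousOn_iff_continuous_restrict.1 hcont
    have hemb : MeasurableEmbedding (Subtype.val : Set.Ioi r0 → ℝ) :=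
      MeasurableEmbedding.subtype_coe measurableSet_Ioi
    have hSim : S = Subtype.val ''
        {x : Set.Ioi r0 | ε < ψ x / deriv ψ x * |f (x : ℝ)|} := by
      ext t
      simp only [hSdef, Set.mem_image, Set.mem_setOf_eq]
      constructor
      · rintro ⟨ht, h⟩; exact ⟨⟨t, ht⟩, h, rfl⟩
      · rintro ⟨⟨x, hx⟩, h, rfl⟩; exact ⟨hx, h⟩
    rw [hSim]
    apply hemb.measurableSet_image.2
    apply measurableSet_lt measurable_const
    exact (hrest.measurable.div
        ((measurable_deriv ψ).comp measurable_subtype_coe)).mul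
      ((hmeas.comp measurable_subtype_coe).abs)
  -- main integrability and bound on pieces
  have hmain : ∀ a r : ℝ, r0 ≤ a → a ≤ r → r0 < r →
      IntegrableOn (fun t => deriv ψ t) (S ∩ Set.Ico a r) ∧
      (∫ t in S ∩ Set.Ico a r, deriv ψ t) ≤ ψ r * (∫ t in Set.Ici a, |f t|) / ε := by
    intro a r ha har hrr0
    have hψr : 0 < ψ r := hψ.pos r (hdom hrr0)
    have hsub : S ∩ Set.Ico a r ⊆ Set.Ici a := fun t ht => ht.2.1
    have hg : IntegrableOn (fun t => ψ r * |f t| / ε) (Set.Ici a) :=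
      (((hint.mono_set (Set.Ici_subset_Ici.2 ha)).abs.const_mul (ψ r)).div_const ε)
    have hmm : MeasurableSet (S ∩ Set.Ico a r) := hSmeas.inter measurableSet_Ico
    have hptbd : ∀ t ∈ S ∩ Set.Ico a r, deriv ψ t ≤ ψ r * |f t| / ε := by
      rintro t ⟨htS, hta, htr⟩
      refine le_trans (hkey t htS) ?_
      have hψle : ψ t ≤ ψ r := (hψ.strictMono (hdom htS.1) (hdom hrr0) htr).le
      gcongr
    have hintd : IntegrableOn (fun t => deriv ψ t) (S ∩ Set.Ico a r) := by
      refine (hg.mono_set hsub).mono'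
        ((measurable_deriv ψ).aestronglyMeasurable.restrict) ?_
      rw [ae_restrict_iff' hmm]
      refine Filter.Eventually.of_forall fun t ht => ?_
      rw [Real.norm_eq_abs, abs_of_nonneg (hd0 t ht.1.1)]
      exact hptbd t ht
    refine ⟨hintd, ?_⟩
    calc (∫ t in S ∩ Set.Ico a r, deriv ψ t)
        ≤ ∫ t in S ∩ Set.Ico a r, ψ r * |f t| / ε :=
          setIntegral_mono_on hintd (hg.mono_set hsub) hmm hptbd
      _ ≤ ∫ t in Set.Ici a, ψ r * |f t| / ε := by
          refine setIntegral_mono_set hg ?_ (HasSubset.Subset.eventuallyLE hsub)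
          refine Filter.Eventually.of_forall fun t => ?_
          positivity
      _ = ψ r * (∫ t in Set.Ici a, |f t|) / ε := by
          rw [integral_div, integral_const_mul]
  have hDF : densFilter ⊤ = atTop := densFilter_top
  have hten : Tendsto ψ atTop atTop := hDF ▸ hψ.unbounded
  rw [upperPsiDens, hDF]
  set A : ℝ → ℝ := fun r => (∫ t in S ∩ Set.Ico r0 r, deriv ψ t) / ψ r with hA
  have hApos : ∀ᶠ r in atTop, 0 ≤ A r := by
    filter_upwards [eventually_gt_atTop r0] with r hr
    apply div_nonneg
    · exact setIntegral_nonneg (hSmeas.inter measurableSet_Ico) fun t ht => hd0 t ht.1.1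
    · exact (hψ.pos r (hdom hr)).le
  have hAbd : ∀ δ : ℝ, 0 < δ → ∀ᶠ r in atTop, A r ≤ δ := by
    intro δ hδ
    -- choose a cutoff ρ with small tail
    obtain ⟨ρ, hρ1, hρ2⟩ : ∃ ρ : ℝ, r0 < ρ ∧ (∫ t in Set.Ici ρ, |f t|) ≤ ε * δ / 2 := by
      have L : Tendsto (fun n : ℕ => ∫ t in Set.Ici (n : ℝ), |f t|) atTop
          (nhds (∫ t in ⋂ n : ℕ, Set.Ici (n : ℝ), |f t|)) := by
        apply tendsto_setIntegral_of_antitone (fun n => measurableSet_Ici)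
        · exact fun m n hmn => Set.Ici_subset_Ici.2 (Nat.cast_le.mpr hmn)
        · rcases exists_nat_gt r0 with ⟨n, hn⟩
          exact ⟨n, MeasureTheory.IntegrableOn.mono_set hint.abs (Set.Ici_subset_Ici.2 hn.le)⟩
      have hB : (⋂ n : ℕ, Set.Ici ((n : ℕ) : ℝ)) = ∅ := by
        apply Set.eq_empty_of_forall_notMem fun x => ?_
        simpa only [Set.mem_iInter, Set.mem_Ici, not_forall, not_le] using exists_nat_gt x
      rw [hB] at L
      simp only [Measure.restrict_empty, integral_zero_measure] at L
      have hev : ∀ᶠ n : ℕ in atTop, (∫ t in Set.Ici ((n : ℕ) : ℝ), |f t|) ≤ ε * δ / 2 := by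
        have := L.eventually (ge_mem_nhds (show (0:ℝ) < ε * δ / 2 by positivity))
        filter_upwards [this] with n hn using hn
      rcases exists_nat_gt r0 with ⟨n0, hn0⟩
      rcases (hev.and (eventually_ge_atTop n0)).exists with ⟨n, hn, hn'⟩
      exact ⟨n, lt_of_lt_of_le hn0 (Nat.cast_le.2 hn'), hn⟩
    set C : ℝ := ∫ t in S ∩ Set.Ico r0 ρ, deriv ψ t with hC
    have hC0 : 0 ≤ C :=
      setIntegral_nonneg (hSmeas.inter measurableSet_Ico) fun t ht => hd0 t ht.1.1
    filter_upwards [eventually_ge_atTop ρ,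
      hten.eventually_ge_atTop (max 1 (C / (δ / 2)))] with r hrρ hrψ
    have hrr0 : r0 < r := hρ1.trans_le hrρ
    have hψr : 0 < ψ r := hψ.pos r (hdom hrr0)
    obtain ⟨hint1, -⟩ := hmain r0 ρ le_rfl hρ1.le hρ1
    obtain ⟨hint2, hbd2⟩ := hmain ρ r hρ1.le hrρ hrr0
    have hsplit : S ∩ Set.Ico r0 r = (S ∩ Set.Ico r0 ρ) ∪ (S ∩ Set.Ico ρ r) := by
      rw [← Set.inter_union_distrib_left, Set.Ico_union_Ico_eq_Ico hρ1.le hrρ]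
    have hdisj : Disjoint (S ∩ Set.Ico r0 ρ) (S ∩ Set.Ico ρ r) :=
      (Set.Ico_disjoint_Ico_same).mono Set.inter_subset_right Set.inter_subset_right
    have hAr : A r = (C + ∫ t in S ∩ Set.Ico ρ r, deriv ψ t) / ψ r := by
      rw [hA]
      dsimp only
      rw [hsplit, setIntegral_union hdisj (hSmeas.inter measurableSet_Ico) hint1 hint2]
    rw [hAr, div_le_iff₀ hψr]
    have hb2 : (∫ t in S ∩ Set.Ico ρ r, deriv ψ t) ≤ ψ r * (δ / 2) := by
      refine le_trans hbd2 ?_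
      calc ψ r * (∫ t in Set.Ici ρ, |f t|) / ε ≤ ψ r * (ε * δ / 2) / ε := by gcongr
        _ = ψ r * (δ / 2) := by field_simp
    have hb1 : C ≤ ψ r * (δ / 2) := by
      have h1 : C / (δ / 2) ≤ ψ r := le_trans (le_max_right _ _) hrψ
      calc C = C / (δ / 2) * (δ / 2) := by field_simp
        _ ≤ ψ r * (δ / 2) := by gcongr
    linarith
  -- conclude : limsup A atTop = 0
  have hbdd : IsBoundedUnder (· ≤ ·) atTop A :=
    isBoundedUnder_of_eventually_le (hAbd 1 one_pos)
  have hcobdd : IsCoboundedUnder (· ≤ ·) atTop A :=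
    (isBoundedUnder_of_eventually_ge hApos).isCoboundedUnder_le
  refine le_antisymm ?_ ?_
  · refine le_of_forall_pos_le_add fun δ hδ => ?_
    have := Filter.limsup_le_of_le hcobdd (hAbd δ hδ)
    simpa using this
  · exact Filter.le_limsup_of_frequently_le (hApos.frequently) hbdd
end

section
/- Let r0 > 0 and let f : [r0,∞) → ℝ be measurable with ∫_{r0}^∞ |f(t)| dt < ∞. Suppose there exist ψ ∈ D(r0,∞) and r1 ≥ r0 such that at least one of the following holds: (i) the function r ↦ ψ(r)²·|f(r)|/ψ'(r) is non-decreasing on (r1,∞); (ii) the function r ↦ |f(r)|/ψ'(r) is non-increasing on (r1,∞). Then lim_{r→∞} (ψ(r)/ψ'(r))·f(r) = 0. -/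
open MeasureTheory Filter Set

theorem statement19 (r0 : ℝ) (hr0 : 0 < r0) (f : ℝ → ℝ) (hmeas : Measurable f)
    (hint : IntegrableOn f (Set.Ici r0))
    (ψ : ℝ → ℝ) (hψ : PsiClass r0 ⊤ ψ) (r1 : ℝ) (hr1 : r0 ≤ r1)
    (hcond : MonotoneOn (fun r => ψ r ^ 2 * |f r| / deriv ψ r) (Set.Ioi r1) ∨
             AntitoneOn (fun r => |f r| / deriv ψ r) (Set.Ioi r1)) :
    Filter.Tendsto (fun r => ψ r / deriv ψ r * f r) Filter.atTop (nhds 0) := by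
  -- Basic facts from the PsiClass hypothesis, specialized to `R = ⊤`.
  have hdom : psiDomain r0 ⊤ = Set.Ioi r0 := by
    ext x; simp [psiDomain, lt_top_iff_ne_top]
  have hpos : ∀ r ∈ Set.Ioi r0, 0 < ψ r := by rw [← hdom]; exact hψ.pos
  have hdiff : ∀ r ∈ Set.Ioi r0, DifferentiableAt ℝ ψ r := by
    rw [← hdom]; exact hψ.differentiable
  have hmono : MonotoneOn ψ (Set.Ioi r0) := by
    rw [← hdom]; exact hψ.strictMono.monotoneOn
  -- `densFilter ⊤ ≥ atTop`, hence `ψ → ∞` along `atTop`.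
  have hcoe : Filter.Tendsto (fun x : ℝ => (x : EReal)) Filter.atTop
      (nhdsWithin (⊤ : EReal) (Set.Iio ⊤)) := by
    apply tendsto_nhdsWithin_of_tendsto_nhds_of_eventually_within
    · exact EReal.tendsto_nhds_top_iff_real.2 fun x => by
        filter_upwards [eventually_gt_atTop x] with a ha using EReal.coe_lt_coe_iff.2 ha
    · exact Filter.Eventually.of_forall fun x => by
        simp [lt_top_iff_ne_top]
  have Tψ : Filter.Tendsto ψ Filter.atTop Filter.atTop :=
    hψ.unbounded.mono_left (Filter.tendsto_iff_comap.1 hcoe)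
  -- Nonnegativity of the derivative.
  have hd0 : ∀ r ∈ Set.Ioi r0, 0 ≤ deriv ψ r := by
    intro r hr
    have hD : Filter.Tendsto (slope ψ r) (nhdsWithin r {r}ᶜ) (nhds (deriv ψ r)) :=
      hasDerivAt_iff_tendsto_slope.1 (hdiff r hr).hasDerivAt
    have hD' : Filter.Tendsto (slope ψ r) (nhdsWithin r (Set.Ioi r)) (nhds (deriv ψ r)) :=
      hD.mono_left (nhdsWithin_mono _ fun y hy => ne_of_gt hy)
    refine ge_of_tendsto hD' ?_
    filter_upwards [self_mem_nhdsWithin] with y hy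
    have hy' : r < y := hy
    have h1 : ψ r ≤ ψ y := hmono hr (lt_trans hr hy') hy'.le
    rw [slope_def_field]
    exact div_nonneg (by linarith) (by linarith)
  -- Integrability of |f|.
  have habs : IntegrableOn (fun t => |f t|) (Set.Ici r0) := hint.abs
  have habs_sub : ∀ s : Set ℝ, s ⊆ Set.Ici r0 → IntegrableOn (fun t => |f t|) s :=
    fun s hs => habs.mono_set hs
  -- The tail integral and its convergence to 0.
  set T : ℝ → ℝ := fun s => ∫ t in Set.Ioi s, |f t| with hTdef
  have hT0 : ∀ s, 0 ≤ T s := fun s =>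
    MeasureTheory.setIntegral_nonneg measurableSet_Ioi fun t _ => abs_nonneg _
  have hIoi_sub : ∀ s, r0 ≤ s → Set.Ioi s ⊆ Set.Ici r0 :=
    fun s hs x hx => le_of_lt (lt_of_le_of_lt hs hx)
  have hIoc_sub : ∀ a b : ℝ, r0 ≤ a → Set.Ioc a b ⊆ Set.Ici r0 :=
    fun a b ha x hx => le_of_lt (lt_of_le_of_lt ha hx.1)
  set C : ℝ := ∫ t in Set.Ioi r0, |f t| with hCdef
  have hsplit : ∀ s, r0 ≤ s → (∫ t in Set.Ioc r0 s, |f t|) + T s = C := by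
    intro s hs
    rw [hTdef, hCdef, ← MeasureTheory.setIntegral_union (Set.Ioc_disjoint_Ioi le_rfl)
      measurableSet_Ioi (habs_sub _ (hIoc_sub r0 s le_rfl)) (habs_sub _ (hIoi_sub s hs)),
      Set.Ioc_union_Ioi_eq_Ioi hs]
  have hTtend : Filter.Tendsto T Filter.atTop (nhds 0) := by
    have h1 : Filter.Tendsto (fun s => ∫ t in r0..s, |f t|) Filter.atTop (nhds C) :=
      MeasureTheory.intervalIntegral_tendsto_integral_Ioi r0
        (habs_sub _ (hIoi_sub r0 le_rfl)) tendsto_id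
    have h2 : Filter.Tendsto (fun s => C - ∫ t in r0..s, |f t|) Filter.atTop (nhds (C - C)) :=
      tendsto_const_nhds.sub h1
    rw [sub_self] at h2
    refine h2.congr' ?_
    filter_upwards [eventually_ge_atTop r0] with s hs
    rw [intervalIntegral.integral_of_le hs]
    have := hsplit s hs
    linarith
  -- Continuity of ψ on intervals inside the domain.
  have hcont : ∀ a b : ℝ, r0 < a → ContinuousOn ψ (Set.Icc a b) := fun a b ha =>
    fun x hx => ((hdiff x (lt_of_lt_of_le ha hx.1)).continuousAt).continuousWithinAt
  -- FTC A : integral of deriv ψ.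
  have keyA : ∀ a b : ℝ, r0 < a → a ≤ b → ∫ t in Set.Ioc a b, deriv ψ t = ψ b - ψ a := by
    intro a b ha hab
    have hIoo : Set.Ioo a b ⊆ Set.Ioi r0 := fun x hx => lt_trans ha hx.1
    have hInt : IntegrableOn (deriv ψ) (Set.Ioc a b) :=
      intervalIntegral.integrableOn_deriv_of_nonneg (hcont a b ha)
        (fun x hx => (hdiff x (hIoo hx)).hasDerivAt) (fun x hx => hd0 x (hIoo hx))
    have hI : IntervalIntegrable (deriv ψ) volume a b :=
      (intervalIntegrable_iff_integrableOn_Ioc_of_le hab).2 hInt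
    have := intervalIntegral.integral_eq_sub_of_hasDerivAt (f := ψ) (f' := deriv ψ)
      (a := a) (b := b) (fun x hx => by
        rw [Set.uIcc_of_le hab] at hx
        exact (hdiff x (lt_of_lt_of_le ha hx.1)).hasDerivAt) hI
    rwa [intervalIntegral.integral_of_le hab] at this
  -- FTC B : integral of deriv ψ / ψ².
  have hu : ∀ t ∈ Set.Ioi r0, HasDerivAt (fun y => -(ψ y)⁻¹) (deriv ψ t / ψ t ^ 2) t := by
    intro t ht
    have h1 := ((hdiff t ht).hasDerivAt.inv (ne_of_gt (hpos t ht))).neg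
    simp only [neg_div, neg_neg] at h1
    exact h1
  have hq0 : ∀ t ∈ Set.Ioi r0, 0 ≤ deriv ψ t / ψ t ^ 2 :=
    fun t ht => div_nonneg (hd0 t ht) (sq_nonneg _)
  have hBint : ∀ a b : ℝ, r0 < a →
      IntegrableOn (fun t => deriv ψ t / ψ t ^ 2) (Set.Ioc a b) := by
    intro a b ha
    have hIoo : Set.Ioo a b ⊆ Set.Ioi r0 := fun x hx => lt_trans ha hx.1
    exact intervalIntegral.integrableOn_deriv_of_nonneg
      (((hcont a b ha).inv₀ fun x hx => ne_of_gt (hpos x (lt_of_lt_of_le ha hx.1))).neg)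
      (fun x hx => hu x (hIoo hx)) (fun x hx => hq0 x (hIoo hx))
  have keyB : ∀ a b : ℝ, r0 < a → a ≤ b →
      ∫ t in Set.Ioc a b, deriv ψ t / ψ t ^ 2 = (ψ a)⁻¹ - (ψ b)⁻¹ := by
    intro a b ha hab
    have hI : IntervalIntegrable (fun t => deriv ψ t / ψ t ^ 2) volume a b :=
      (intervalIntegrable_iff_integrableOn_Ioc_of_le hab).2 (hBint a b ha)
    have := intervalIntegral.integral_eq_sub_of_hasDerivAt (f := fun y => -(ψ y)⁻¹)
      (f' := fun t => deriv ψ t / ψ t ^ 2) (a := a) (b := b)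
      (fun x hx => by
        rw [Set.uIcc_of_le hab] at hx
        exact hu x (lt_of_lt_of_le ha hx.1)) hI
    rw [intervalIntegral.integral_of_le hab] at this
    rw [this]; ring
  -- The bounding function G.
  set G : ℝ → ℝ := fun r => ψ r * |f r| / deriv ψ r with hGdef
  have hG0 : ∀ r ∈ Set.Ioi r0, 0 ≤ G r := fun r hr =>
    div_nonneg (mul_nonneg (hpos r hr).le (abs_nonneg _)) (hd0 r hr)
  -- main step : G tends to 0
  have hGtend : Filter.Tendsto G Filter.atTop (nhds 0) := by
    rcases hcond with hmono1 | hanti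
    · -- case (i)
      set h : ℝ → ℝ := fun r => ψ r ^ 2 * |f r| / deriv ψ r with hhdef
      -- pointwise bound : G s ≤ T s for s > r1
      have hbound : ∀ s, r1 < s → G s ≤ T s := by
        intro s hs
        have hs0 : r0 < s := lt_of_le_of_lt hr1 hs
        have key : ∀ r, s ≤ r → h s * ((ψ s)⁻¹ - (ψ r)⁻¹) ≤ T s := by
          intro r hr
          rw [← keyB s r hs0 hr, ← MeasureTheory.integral_const_mul]
          calc ∫ t in Set.Ioc s r, h s * (deriv ψ t / ψ t ^ 2)
              ≤ ∫ t in Set.Ioc s r, |f t| := by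
                refine MeasureTheory.setIntegral_mono_on
                  ((hBint s r hs0).const_mul _) (habs_sub _ (hIoc_sub s r hs0.le))
                  measurableSet_Ioc ?_
                intro t ht
                have ht0 : r0 < t := lt_trans hs0 ht.1
                have hmle : h s ≤ h t := hmono1 hs (lt_trans hs ht.1) ht.1.le
                have h2 : h t * (deriv ψ t / ψ t ^ 2) ≤ |f t| := by
                  rcases eq_or_ne (deriv ψ t) 0 with hz | hz
                  · simp [hhdef, hz, abs_nonneg]
                  · have hψt : ψ t ≠ 0 := ne_of_gt (hpos t ht0)
                    have heq : h t * (deriv ψ t / ψ t ^ 2) = |f t| := by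
                      rw [hhdef]
                      field_simp
                    rw [heq]
                calc h s * (deriv ψ t / ψ t ^ 2)
                    ≤ h t * (deriv ψ t / ψ t ^ 2) :=
                      mul_le_mul_of_nonneg_right hmle (hq0 t ht0)
                  _ ≤ |f t| := h2
            _ ≤ T s := by
                refine MeasureTheory.setIntegral_mono_set
                  (habs_sub _ (hIoi_sub s hs0.le)) ?_ ?_
                · exact Filter.Eventually.of_forall fun t => abs_nonneg _
                · exact HasSubset.Subset.eventuallyLE Set.Ioc_subset_Ioi_self
        have lim1 : Filter.Tendsto (fun r => h s * ((ψ s)⁻¹ - (ψ r)⁻¹)) Filter.atTop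
            (nhds (h s * ((ψ s)⁻¹ - 0))) :=
          tendsto_const_nhds.mul (tendsto_const_nhds.sub Tψ.inv_tendsto_atTop)
        have hle : h s * (ψ s)⁻¹ ≤ T s := by
          have := le_of_tendsto lim1 (by
            filter_upwards [eventually_ge_atTop s] with r hr using key r hr)
          simpa using this
        have hGh : G s = h s * (ψ s)⁻¹ := by
          rcases eq_or_ne (deriv ψ s) 0 with hz | hz
          · simp [hGdef, hhdef, hz]
          · rw [hGdef, hhdef]
            have hψs : ψ s ≠ 0 := ne_of_gt (hpos s hs0)
            field_simp
        rw [hGh]; exact hle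
      refine squeeze_zero' ?_ ?_ hTtend
      · filter_upwards [eventually_gt_atTop r0] with r hr using hG0 r hr
      · filter_upwards [eventually_gt_atTop r1] with r hr using hbound r hr
    · -- case (ii)
      set g : ℝ → ℝ := fun r => |f r| / deriv ψ r with hgdef
      have hg0 : ∀ r ∈ Set.Ioi r0, 0 ≤ g r := fun r hr =>
        div_nonneg (abs_nonneg _) (hd0 r hr)
      have key : ∀ s r, r1 < s → s ≤ r → g r * (ψ r - ψ s) ≤ T s := by
        intro s r hs hsr
        have hs0 : r0 < s := lt_of_le_of_lt hr1 hs
        have hr0' : r0 < r := lt_of_lt_of_le hs0 hsr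
        rw [← keyA s r hs0 hsr, ← MeasureTheory.integral_const_mul]
        calc ∫ t in Set.Ioc s r, g r * deriv ψ t
            ≤ ∫ t in Set.Ioc s r, |f t| := by
              refine MeasureTheory.setIntegral_mono_on
                ((intervalIntegral.integrableOn_deriv_of_nonneg (hcont s r hs0)
                  (fun x hx => (hdiff x (lt_trans hs0 hx.1)).hasDerivAt)
                  (fun x hx => hd0 x (lt_trans hs0 hx.1))).const_mul _)
                (habs_sub _ (hIoc_sub s r hs0.le)) measurableSet_Ioc ?_
              intro t ht
              have ht0 : r0 < t := lt_trans hs0 ht.1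
              have hgle : g r ≤ g t :=
                hanti (lt_trans hs ht.1) (lt_of_lt_of_le hs hsr) ht.2
              have h2 : g t * deriv ψ t ≤ |f t| := by
                rcases eq_or_ne (deriv ψ t) 0 with hz | hz
                · simp [hz, abs_nonneg]
                · rw [hgdef, div_mul_cancel₀ _ hz]
              calc g r * deriv ψ t ≤ g t * deriv ψ t :=
                    mul_le_mul_of_nonneg_right hgle (hd0 t ht0)
                _ ≤ |f t| := h2
          _ ≤ T s := by
              refine MeasureTheory.setIntegral_mono_set
                (habs_sub _ (hIoi_sub s hs0.le)) ?_ ?_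
              · exact Filter.Eventually.of_forall fun t => abs_nonneg _
              · exact HasSubset.Subset.eventuallyLE Set.Ioc_subset_Ioi_self
      rw [Metric.tendsto_nhds]
      intro eps heps
      obtain ⟨s, hsT, hs1⟩ : ∃ s, T s < eps / 2 ∧ r1 < s := by
        have := (hTtend.eventually (gt_mem_nhds (half_pos heps))).and
          (eventually_gt_atTop r1)
        exact this.exists
      have hs0 : r0 < s := lt_of_le_of_lt hr1 hs1
      have hψs : 0 < ψ s := hpos s hs0
      set D : ℝ := 2 * ψ s * (T s + 1) / eps with hDdef
      have hD : 0 < D := by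
        apply div_pos _ heps
        have := hT0 s
        positivity
      filter_upwards [eventually_gt_atTop s, Tψ.eventually_ge_atTop (ψ s + D)]
        with r hrs hrψ
      have hr0' : r0 < r := lt_trans hs0 hrs
      have hgr : 0 ≤ g r := hg0 r hr0'
      have hkey : g r * (ψ r - ψ s) ≤ T s := key s r hs1 hrs.le
      have hDle : D ≤ ψ r - ψ s := by linarith
      have hg_small : g r ≤ T s / D := by
        rw [le_div_iff₀ hD]
        calc g r * D ≤ g r * (ψ r - ψ s) := mul_le_mul_of_nonneg_left hDle hgr
          _ ≤ T s := hkey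
      have hgψ : g r * ψ s ≤ eps / 2 := by
        have h1 : g r * ψ s ≤ (T s / D) * ψ s :=
          mul_le_mul_of_nonneg_right hg_small hψs.le
        have h2 : (T s / D) * ψ s = T s * eps / (2 * (T s + 1)) := by
          rw [hDdef]
          field_simp
        have h3 : T s * eps / (2 * (T s + 1)) ≤ eps / 2 := by
          rw [div_le_div_iff₀ (by positivity) (by norm_num)]
          have h4 : T s ≤ T s + 1 := by linarith
          have := hT0 s
          nlinarith
        linarith
      have hGr : G r = g r * (ψ r - ψ s) + g r * ψ s := by
        rw [hGdef, hgdef]; ring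
      have : G r ≤ eps / 2 + eps / 2 := by
        rw [hGr]; linarith
      rw [Real.dist_eq, sub_zero, abs_of_nonneg (hG0 r hr0')]
      linarith
  -- Conclusion by squeezing.
  refine squeeze_zero_norm' ?_ hGtend
  filter_upwards [eventually_gt_atTop r1] with r hr
  have hr0' : r0 < r := lt_of_le_of_lt hr1 hr
  have h1 : 0 ≤ ψ r / deriv ψ r := div_nonneg (hpos r hr0').le (hd0 r hr0')
  rw [hGdef]
  rw [norm_mul, Real.norm_eq_abs, Real.norm_eq_abs, abs_of_nonneg h1,
    div_mul_eq_mul_div]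
end
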